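/- arXiv:1902.10173 — 8 statements merged into one kernel-verified Lean document; each statement's English description precedes it below -/
import Mathlib

section
/- Let Γ and Ω be sets, λ : Γ × Ω → ℝ a loss function, η > 0, d ≥ 1, N ≥ 1. Let q = (q_1, …, q_N) be a probability vector (q_i ≥ 0, Σ_i q_i = 1), let c_i = (c_i^1, …, c_i^d) ∈ Γ^d for 1 ≤ i ≤ N, and let f = (f^1, …, f^d) ∈ Γ^d be such that for every s with 1 ≤ s ≤ d and every y ∈ Ω one has exp(−η·λ(f^s, y)) ≥ Σ_{i=1}^N q_i · exp(−η·λ(c_i^s, y)). Then for every y = (y^1, …, y^d) ∈ Ω^d one has exp(−(η/d)·Σ_{s=1}^d λ(f^s, y^s)) ≥ Σ_{i=1}^N q_i · exp(−(η/d)·Σ_{s=1}^d λ(c_i^s, y^s)). -/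
/-!
Write `exp (-(η / d) * ∑ₛ L(·, yˢ))` as the geometric mean `∏ₛ (exp (-η L(·, yˢ))) ^ (1 / d)`.
The generalized Hölder inequality `∑ᵢ qᵢ ∏ₛ xᵢₛ ^ wₛ ≤ ∏ₛ (∑ᵢ qᵢ xᵢₛ) ^ wₛ` (for weights
`wₛ = 1 / d` summing to one) moves the mixture inside the geometric mean, and there each factor
is bounded by the coordinatewise mixability inequality.
-/

open Finset Real

namespace Real

variable {ι κ : Type*} (s : Finset ι) (t : Finset κ)

theorem sum_prod_rpow_le_prod_sum_rpow {x : ι → κ → ℝ} (hx : ∀ i ∈ s, ∀ j ∈ t, 0 ≤ x i j)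
    {w : κ → ℝ} (hw : ∀ j ∈ t, 0 ≤ w j) (hw₁ : ∑ j ∈ t, w j = 1) :
    ∑ i ∈ s, ∏ j ∈ t, x i j ^ w j ≤ ∏ j ∈ t, (∑ i ∈ s, x i j) ^ w j := by
  set A : κ → ℝ := fun j ↦ ∑ i ∈ s, x i j
  have hA : ∀ j ∈ t, 0 ≤ A j := fun j hj ↦ sum_nonneg fun i hi ↦ hx i hi j hj
  rcases (prod_nonneg fun j hj ↦ rpow_nonneg (hA j hj) (w j)).eq_or_lt with hP | hP
  · -- some column with positive weight vanishes, and it kills every product on the left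
    obtain ⟨j, hj, hAj⟩ := prod_eq_zero_iff.mp hP.symm
    obtain ⟨hAj, hwj⟩ := (rpow_eq_zero_iff_of_nonneg (hA j hj)).mp hAj
    have hxj : ∀ i ∈ s, x i j = 0 := (sum_eq_zero_iff_of_nonneg fun i hi ↦ hx i hi j hj).mp hAj
    rw [← hP]
    refine (sum_eq_zero fun i hi ↦ prod_eq_zero hj ?_).le
    rw [hxj i hi, zero_rpow hwj]
  -- AM-GM for the normalized columns `x i j / A j`
  have hAMGM : ∀ i ∈ s, (∏ j ∈ t, x i j ^ w j) / ∏ j ∈ t, A j ^ w j ≤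
      ∑ j ∈ t, w j * (x i j / A j) := fun i hi ↦ by
    rw [← prod_div_distrib]
    refine (prod_congr rfl fun j hj ↦ (div_rpow (hx i hi j hj) (hA j hj) _).symm).trans_le ?_
    exact geom_mean_le_arith_mean_weighted t w _ hw hw₁
      fun j hj ↦ div_nonneg (hx i hi j hj) (hA j hj)
  rw [← div_le_one hP, sum_div]
  calc ∑ i ∈ s, (∏ j ∈ t, x i j ^ w j) / ∏ j ∈ t, A j ^ w j
      ≤ ∑ i ∈ s, ∑ j ∈ t, w j * (x i j / A j) := sum_le_sum hAMGM
    _ = ∑ j ∈ t, w j * (A j / A j) := by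
        rw [sum_comm]
        simp only [A, ← mul_sum, sum_div]
    _ ≤ ∑ j ∈ t, w j := sum_le_sum fun j hj ↦ mul_le_of_le_one_right (hw j hj) (div_self_le_one _)
    _ = 1 := hw₁

theorem sum_mul_prod_rpow_le_prod_sum_mul_rpow {q : ι → ℝ} (hq : ∀ i ∈ s, 0 ≤ q i)
    {x : ι → κ → ℝ} (hx : ∀ i ∈ s, ∀ j ∈ t, 0 ≤ x i j)
    {w : κ → ℝ} (hw : ∀ j ∈ t, 0 ≤ w j) (hw₁ : ∑ j ∈ t, w j = 1) :
    ∑ i ∈ s, q i * ∏ j ∈ t, x i j ^ w j ≤ ∏ j ∈ t, (∑ i ∈ s, q i * x i j) ^ w j := by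
  have hqx : ∀ i ∈ s, q i * ∏ j ∈ t, x i j ^ w j = ∏ j ∈ t, (q i * x i j) ^ w j := fun i hi ↦ by
    rw [prod_congr rfl fun j hj ↦ mul_rpow (hq i hi) (hx i hi j hj), prod_mul_distrib,
      ← rpow_sum_of_nonneg (hq i hi) hw, hw₁, rpow_one]
  rw [sum_congr rfl hqx]
  exact sum_prod_rpow_le_prod_sum_rpow s t (fun i hi j hj ↦ mul_nonneg (hq i hi) (hx i hi j hj))
    hw hw₁

theorem exp_mul_sum (w : ℝ) (g : κ → ℝ) : exp (w * ∑ j ∈ t, g j) = ∏ j ∈ t, exp (g j) ^ w := by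
  rw [mul_sum, exp_sum]
  exact prod_congr rfl fun j _ ↦ by rw [mul_comm, exp_mul]

end Real

theorem generalized_loss_mixable_general {Γ Ω : Type*} (L : Γ → Ω → ℝ) (η : ℝ)
    (d N : ℕ) (hd : 1 ≤ d)
    (q : Fin N → ℝ) (hq0 : ∀ i, 0 ≤ q i)
    (c : Fin N → Fin d → Γ) (f : Fin d → Γ)
    (hmix : ∀ s : Fin d, ∀ y : Ω,
      Real.exp (-η * L (f s) y) ≥ ∑ i, q i * Real.exp (-η * L (c i s) y)) :
    ∀ y : Fin d → Ω,
      Real.exp (-(η / d) * ∑ s, L (f s) (y s)) ≥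
        ∑ i, q i * Real.exp (-(η / d) * ∑ s, L (c i s) (y s)) := by
  intro y
  have hw₁ : ∑ _s : Fin d, (d : ℝ)⁻¹ = 1 := by
    have hd₀ : (d : ℝ) ≠ 0 := by exact_mod_cast (by omega : d ≠ 0)
    simp [hd₀]
  have hgeom (g : Fin d → Γ) :
      exp (-(η / d) * ∑ s, L (g s) (y s)) = ∏ s, exp (-η * L (g s) (y s)) ^ (d : ℝ)⁻¹ := by
    rw [← exp_mul_sum, mul_sum, mul_sum]
    congr 2 with s
    ring
  have hmixture_nonneg (s : Fin d) : 0 ≤ ∑ i, q i * exp (-η * L (c i s) (y s)) :=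
    sum_nonneg fun i _ ↦ mul_nonneg (hq0 i) (exp_pos _).le
  simp only [hgeom, ge_iff_le]
  calc ∑ i, q i * ∏ s, exp (-η * L (c i s) (y s)) ^ (d : ℝ)⁻¹
      ≤ ∏ s, (∑ i, q i * exp (-η * L (c i s) (y s))) ^ (d : ℝ)⁻¹ :=
        sum_mul_prod_rpow_le_prod_sum_mul_rpow _ _ (fun i _ ↦ hq0 i)
          (fun _ _ _ _ ↦ (exp_pos _).le) (fun _ _ ↦ by positivity) hw₁
    _ ≤ ∏ s, exp (-η * L (f s) (y s)) ^ (d : ℝ)⁻¹ :=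
        prod_le_prod (fun s _ ↦ rpow_nonneg (hmixture_nonneg s) _)
          fun s _ ↦ rpow_le_rpow (hmixture_nonneg s) (hmix s (y s)) (by positivity)

/-- Mixability of the generalized (sum-of-coordinates) loss: if the per-coordinate
mixability inequalities at learning rate `η` hold for the aggregated forecasts `f s`,
then the vector-valued mixability inequality holds at learning rate `η / d`. -/
theorem generalized_loss_mixable {Γ Ω : Type*} (L : Γ → Ω → ℝ) (η : ℝ) (hη : 0 < η)
    (d N : ℕ) (hd : 1 ≤ d) (hN : 1 ≤ N)
    (q : Fin N → ℝ) (hq0 : ∀ i, 0 ≤ q i) (hq1 : ∑ i, q i = 1)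
    (c : Fin N → Fin d → Γ) (f : Fin d → Γ)
    (hmix : ∀ s : Fin d, ∀ y : Ω,
      Real.exp (-η * L (f s) y) ≥ ∑ i, q i * Real.exp (-η * L (c i s) y)) :
    ∀ y : Fin d → Ω,
      Real.exp (-(η / d) * ∑ s, L (f s) (y s)) ≥
        ∑ i, q i * Real.exp (-(η / d) * ∑ s, L (c i s) (y s)) :=
  generalized_loss_mixable_general L η d N hd q hq0 c f hmix
end

section
/- Let 0 < η ≤ 2 and N ≥ 1. Let q = (q_1, …, q_N) be a probability vector (q_i ≥ 0, Σ_i q_i = 1) and let c_1, …, c_N ∈ [0,1]. Define f = 1/2 − (1/(2η)) · ln( (Σ_{i=1}^N q_i · e^{−η c_i²}) / (Σ_{i=1}^N q_i · e^{−η (1−c_i)²}) ). Then for each ω ∈ {0,1} one has exp(−η·(f − ω)²) ≥ Σ_{i=1}^N q_i · exp(−η·(c_i − ω)²). -/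
/-!
For `f ∈ [0,1]` and every real `x`,
`f · e^{-η(1-x)²} / e^{-η(1-f)²} + (1-f) · e^{-ηx²} / e^{-ηf²} ≤ 1`.
Writing `x = f + d`, the left side is `e^{-ηd²}` times the moment generating function at `2ηd`
of a centred Bernoulli(`f`) variable, which Hoeffding's lemma bounds by `e^{η²d²/2}`; this is at
most `e^{ηd²}` exactly when `η ≤ 2`. Averaging over the experts with weights `q` gives
`f · B / e^{-η(1-f)²} + (1-f) · A / e^{-ηf²} ≤ 1` for the mixtures `A`, `B` of the two
exponentiated losses, and the substitution `f` is the point where the two ratios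
`A / e^{-ηf²}` and `B / e^{-η(1-f)²}` coincide, so both are at most `1`.
-/

open Real Finset ProbabilityTheory MeasureTheory

lemma bernoulli_mgf_le {p : ℝ} (hp : p ∈ Set.Icc (0 : ℝ) 1) (t : ℝ) :
    p * exp (t * (1 - p)) + (1 - p) * exp (-(t * p)) ≤ exp (t ^ 2 / 8) := by
  have hHoeffding := (hasSubgaussianMGF_of_mem_Icc_of_integral_eq_zero
    (μ := Ber(true, false, ⟨p, hp⟩)) (X := fun b => (if b then 1 else 0) - p)
    (a := -p) (b := 1 - p) (by fun_prop) (.of_forall fun b => by cases b <;> simp)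
    (by simp [integral_bernoulliMeasure]; ring)).mgf_le t
  convert hHoeffding using 1
  · simp [mgf, integral_bernoulliMeasure]
  · norm_num
    ring_nf

lemma square_loss_tangent {η f : ℝ} (hη : 0 ≤ η) (hη2 : η ≤ 2) (hf : f ∈ Set.Icc (0 : ℝ) 1)
    (x : ℝ) :
    f * exp (-η * (1 - x) ^ 2) * exp (-η * f ^ 2)
        + (1 - f) * exp (-η * x ^ 2) * exp (-η * (1 - f) ^ 2)
      ≤ exp (-η * f ^ 2) * exp (-η * (1 - f) ^ 2) := by
  obtain ⟨d, rfl⟩ : ∃ d, x = f + d := ⟨x - f, by ring⟩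
  have h1 : exp (-η * (1 - (f + d)) ^ 2)
      = exp (-η * (1 - f) ^ 2) * exp (-η * d ^ 2) * exp (2 * η * d * (1 - f)) := by
    rw [← exp_add, ← exp_add]; ring_nf
  have h0 : exp (-η * (f + d) ^ 2)
      = exp (-η * f ^ 2) * exp (-η * d ^ 2) * exp (-(2 * η * d * f)) := by
    rw [← exp_add, ← exp_add]; ring_nf
  have hdecay : exp (-η * d ^ 2) * exp ((2 * η * d) ^ 2 / 8) ≤ 1 := by
    rw [← exp_add, exp_le_one_iff]
    nlinarith [mul_nonneg (mul_nonneg hη (sub_nonneg.2 hη2)) (sq_nonneg d)]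
  calc _ = exp (-η * f ^ 2) * exp (-η * (1 - f) ^ 2) * (exp (-η * d ^ 2) *
        (f * exp (2 * η * d * (1 - f)) + (1 - f) * exp (-(2 * η * d * f)))) := by
        rw [h1, h0]; ring
    _ ≤ exp (-η * f ^ 2) * exp (-η * (1 - f) ^ 2) * 1 := by
        gcongr
        exact (mul_le_mul_of_nonneg_left (bernoulli_mgf_le hf _) (exp_pos _).le).trans hdecay
    _ = _ := mul_one _

noncomputable def substitution (η A B : ℝ) : ℝ :=
  1 / 2 - 1 / (2 * η) * log (A / B)

lemma substitution_mem_Icc {η A B : ℝ} (hη : 0 < η) (hA : 0 < A) (hB : 0 < B)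
    (hAB : A ≤ exp η * B) (hBA : B ≤ exp η * A) : substitution η A B ∈ Set.Icc (0 : ℝ) 1 := by
  have hle : log (A / B) ≤ η := by
    rw [log_le_iff_le_exp (div_pos hA hB), div_le_iff₀ hB]; exact hAB
  have hge : -η ≤ log (A / B) := by
    rw [le_log_iff_exp_le (div_pos hA hB), le_div_iff₀ hB, exp_neg, ← div_eq_inv_mul,
      div_le_iff₀ (exp_pos η)]
    linarith
  unfold substitution
  constructor <;> rw [← sub_nonneg] <;> field_simp <;> linarith

lemma mul_exp_substitution_eq {η A B : ℝ} (hη : η ≠ 0) (hA : 0 < A) (hB : 0 < B) :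
    A * exp (-η * (1 - substitution η A B) ^ 2) = B * exp (-η * substitution η A B ^ 2) := by
  have hlog : log (A / B) = η * (1 - 2 * substitution η A B) := by
    unfold substitution; field_simp; ring
  calc A * exp (-η * (1 - substitution η A B) ^ 2)
      = B * (exp (log (A / B)) * exp (-η * (1 - substitution η A B) ^ 2)) := by
        rw [exp_log (div_pos hA hB)]; field_simp
    _ = B * exp (-η * substitution η A B ^ 2) := by rw [← exp_add, hlog]; ring_nf

lemma le_and_le_of_balanced {f A B a b : ℝ} (ha : 0 < a) (hb : 0 < b) (hbal : A * b = B * a)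
    (hmix : f * B * a + (1 - f) * A * b ≤ a * b) : A ≤ a ∧ B ≤ b := by
  have hAb : A * b ≤ a * b := by linear_combination hmix + f * hbal
  have hBa : B * a ≤ b * a := by linear_combination hmix - (1 - f) * hbal
  exact ⟨le_of_mul_le_mul_right hAb hb, le_of_mul_le_mul_right hBa ha⟩

section WeightedSums

variable {ι : Type*} [Fintype ι] {q : ι → ℝ}

lemma sum_mul_pos_of_sum_eq_one (hq0 : ∀ i, 0 ≤ q i) (hq1 : ∑ i, q i = 1) {g : ι → ℝ}
    (hg : ∀ i, 0 < g i) : 0 < ∑ i, q i * g i := by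
  obtain ⟨i, -, hi⟩ := exists_ne_zero_of_sum_ne_zero (hq1 ▸ one_ne_zero)
  exact sum_pos' (fun j _ => mul_nonneg (hq0 j) (hg j).le)
    ⟨i, mem_univ i, mul_pos ((hq0 i).lt_of_ne' hi) (hg i)⟩

lemma sum_mul_le_of_sum_eq_one (hq0 : ∀ i, 0 ≤ q i) (hq1 : ∑ i, q i = 1) {g : ι → ℝ} {M : ℝ}
    (hg : ∀ i, g i ≤ M) : ∑ i, q i * g i ≤ M :=
  calc ∑ i, q i * g i ≤ ∑ i, q i * M :=
        sum_le_sum fun i _ => mul_le_mul_of_nonneg_left (hg i) (hq0 i)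
    _ = M := by rw [← sum_mul, hq1, one_mul]

lemma sum_mul_exp_le_exp_mul_sum (hq0 : ∀ i, 0 ≤ q i) {η : ℝ} (hη : 0 ≤ η) {a b : ι → ℝ}
    (hab : ∀ i, b i ≤ a i + 1) :
    ∑ i, q i * exp (-η * a i) ≤ exp η * ∑ i, q i * exp (-η * b i) := by
  rw [mul_sum]
  refine sum_le_sum fun i _ => ?_
  rw [mul_left_comm, ← exp_add]
  exact mul_le_mul_of_nonneg_left (exp_le_exp.2 (by nlinarith [hab i])) (hq0 i)

end WeightedSums

theorem square_loss_mixable_general (η : ℝ) (hη : 0 < η) (hη2 : η ≤ 2) (N : ℕ)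
    (q : Fin N → ℝ) (hq0 : ∀ i, 0 ≤ q i) (hq1 : ∑ i, q i = 1)
    (c : Fin N → ℝ) (hc : ∀ i, c i ∈ Set.Icc (0 : ℝ) 1) :
    ∀ ω ∈ ({0, 1} : Set ℝ),
      Real.exp (-η * ((1 / 2 - (1 / (2 * η)) * Real.log
          ((∑ i, q i * Real.exp (-η * (c i) ^ 2)) /
            (∑ i, q i * Real.exp (-η * (1 - c i) ^ 2)))) - ω) ^ 2) ≥
        ∑ i, q i * Real.exp (-η * (c i - ω) ^ 2) := by
  set A := ∑ i, q i * exp (-η * c i ^ 2)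
  set B := ∑ i, q i * exp (-η * (1 - c i) ^ 2)
  change ∀ ω ∈ ({0, 1} : Set ℝ), exp (-η * (substitution η A B - ω) ^ 2) ≥ _
  set F := substitution η A B
  have hA : 0 < A := sum_mul_pos_of_sum_eq_one hq0 hq1 fun i => exp_pos _
  have hB : 0 < B := sum_mul_pos_of_sum_eq_one hq0 hq1 fun i => exp_pos _
  have hF : F ∈ Set.Icc (0 : ℝ) 1 := substitution_mem_Icc hη hA hB
    (sum_mul_exp_le_exp_mul_sum hq0 hη.le fun i => by nlinarith [(hc i).1])
    (sum_mul_exp_le_exp_mul_sum hq0 hη.le fun i => by nlinarith [(hc i).2])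
  have hmix : F * B * exp (-η * F ^ 2) + (1 - F) * A * exp (-η * (1 - F) ^ 2)
      ≤ exp (-η * F ^ 2) * exp (-η * (1 - F) ^ 2) := by
    refine le_of_eq_of_le ?_
      (sum_mul_le_of_sum_eq_one hq0 hq1 fun i => square_loss_tangent hη.le hη2 hF (c i))
    simp only [A, B, mul_sum, sum_mul, ← sum_add_distrib]
    exact sum_congr rfl fun i _ => by ring
  obtain ⟨hAF, hBF⟩ := le_and_le_of_balanced (exp_pos _) (exp_pos _)
    (mul_exp_substitution_eq hη.ne' hA hB) hmix
  rintro ω (rfl | rfl)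
  · simpa only [sub_zero] using hAF
  · simpa only [sub_sq_comm _ (1 : ℝ)] using hBF

/-- The square loss on forecasts in `[0,1]` and binary outcomes is `η`-mixable for
`0 < η ≤ 2`, witnessed by the Aggregating Algorithm substitution function. -/
theorem square_loss_mixable (η : ℝ) (hη : 0 < η) (hη2 : η ≤ 2) (N : ℕ) (hN : 1 ≤ N)
    (q : Fin N → ℝ) (hq0 : ∀ i, 0 ≤ q i) (hq1 : ∑ i, q i = 1)
    (c : Fin N → ℝ) (hc : ∀ i, c i ∈ Set.Icc (0 : ℝ) 1) :
    ∀ ω ∈ ({0, 1} : Set ℝ),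
      Real.exp (-η * ((1 / 2 - (1 / (2 * η)) * Real.log
          ((∑ i, q i * Real.exp (-η * (c i) ^ 2)) /
            (∑ i, q i * Real.exp (-η * (1 - c i) ^ 2)))) - ω) ^ 2) ≥
        ∑ i, q i * Real.exp (-η * (c i - ω) ^ 2) :=
  square_loss_mixable_general η hη hη2 N q hq0 hq1 c hc
end

section
/- Let 0 < η ≤ 1/2 and ω ∈ {0,1}. Then the function f ↦ exp(−η·(f − ω)²) is concave on the interval [0,1]. -/
open Real Set

/-! The second derivative of `x ↦ exp (-η (x - c)²)` is `2η (2η (x - c)² - 1) exp (-η (x - c)²)`,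
which is nonpositive wherever `2η (x - c)² ≤ 1`; for `η ≤ 1/2` it suffices that `|x - c| ≤ 1`. -/

section Gaussian

variable (η c : ℝ)

theorem hasDerivAt_exp_neg_mul_sub_sq (x : ℝ) :
    HasDerivAt (fun x => exp (-η * (x - c) ^ 2))
      (-2 * η * (x - c) * exp (-η * (x - c) ^ 2)) x := by
  have h : HasDerivAt (fun x => -η * (x - c) ^ 2) (-2 * η * (x - c)) x := by
    simpa [mul_assoc, mul_left_comm] using (((hasDerivAt_id x).sub_const c).pow 2).const_mul (-η)
  exact h.exp.congr_deriv (by ring)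

theorem hasDerivAt_deriv_exp_neg_mul_sub_sq (x : ℝ) :
    HasDerivAt (fun x => -2 * η * (x - c) * exp (-η * (x - c) ^ 2))
      (2 * η * (2 * η * (x - c) ^ 2 - 1) * exp (-η * (x - c) ^ 2)) x := by
  have h : HasDerivAt (fun x => -2 * η * (x - c)) (-2 * η) x := by
    simpa using ((hasDerivAt_id x).sub_const c).const_mul (-2 * η)
  exact (h.mul (hasDerivAt_exp_neg_mul_sub_sq η c x)).congr_deriv (by ring)

end Gaussian

theorem concaveOn_exp_neg_mul_sub_sq {η c : ℝ} (hη : 0 ≤ η) {D : Set ℝ} (hD : Convex ℝ D)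
    (hDc : ∀ x ∈ D, 2 * η * (x - c) ^ 2 ≤ 1) :
    ConcaveOn ℝ D (fun x => exp (-η * (x - c) ^ 2)) := by
  refine concaveOn_of_hasDerivWithinAt2_nonpos hD
    (fun x _ => (hasDerivAt_exp_neg_mul_sub_sq η c x).continuousAt.continuousWithinAt)
    (fun x _ => (hasDerivAt_exp_neg_mul_sub_sq η c x).hasDerivWithinAt)
    (fun x _ => (hasDerivAt_deriv_exp_neg_mul_sub_sq η c x).hasDerivWithinAt)
    (fun x hx => ?_)
  have hx' : 2 * η * (x - c) ^ 2 - 1 ≤ 0 := sub_nonpos.2 (hDc x (interior_subset hx))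
  exact mul_nonpos_of_nonpos_of_nonneg (mul_nonpos_of_nonneg_of_nonpos (by positivity) hx')
    (exp_nonneg _)

theorem sq_sub_le_one_of_mem_Icc_of_mem_pair {x ω : ℝ} (hx : x ∈ Icc (0 : ℝ) 1)
    (hω : ω ∈ ({0, 1} : Set ℝ)) : (x - ω) ^ 2 ≤ 1 := by
  obtain ⟨hx0, hx1⟩ := hx
  rcases hω with rfl | rfl <;> nlinarith

/-- The square loss is `η`-exponentially concave on `[0,1]` for `0 < η ≤ 1/2`:
the map `f ↦ exp (-η * (f - ω)^2)` is concave on `[0,1]` for binary outcomes `ω`. -/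
theorem square_loss_exp_concave (η : ℝ) (hη : 0 < η) (hη2 : η ≤ 1 / 2)
    (ω : ℝ) (hω : ω ∈ ({0, 1} : Set ℝ)) :
    ConcaveOn ℝ (Set.Icc (0 : ℝ) 1) (fun f => Real.exp (-η * (f - ω) ^ 2)) := by
  refine concaveOn_exp_neg_mul_sub_sq hη.le (convex_Icc 0 1) fun x hx => ?_
  have hsq := sq_sub_le_one_of_mem_Icc_of_mem_pair hx hω
  nlinarith [sq_nonneg (x - ω)]
end

section
/- Let a < b be real numbers and N ≥ 1. Let q = (q_1, …, q_N) be a probability vector and let F_1, …, F_N be distribution functions on [a,b]. Define F : [a,b] → ℝ by F(u) = 1/2 − (1/4) · ln( (Σ_{i=1}^N q_i · e^{−2 F_i(u)²}) / (Σ_{i=1}^N q_i · e^{−2 (1 − F_i(u))²}) ). Then for every y ∈ [a,b] one has exp(−(2/(b−a)) · CRPS(F, y)) ≥ Σ_{i=1}^N q_i · exp(−(2/(b−a)) · CRPS(F_i, y)). In other words, the loss function CRPS is (2/(b−a))-mixable and the displayed formula is a substitution function witnessing this. -/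
/-- A distribution function on `[a,b]`: nondecreasing on `[a,b]` with `F a = 0`, `F b = 1`. -/
def DistFunc (a b : ℝ) (F : ℝ → ℝ) : Prop :=
  MonotoneOn F (Set.Icc a b) ∧ F a = 0 ∧ F b = 1

/-- The continuous ranked probability score
`CRPS(F, y) = ∫_a^b (F u - H(u - y))^2 du`, where `H` is the Heaviside function
(`H(u - y) = 1` iff `u ≥ y`). -/
noncomputable def CRPS (a b : ℝ) (F : ℝ → ℝ) (y : ℝ) : ℝ :=
  ∫ u in a..b, (F u - (if y ≤ u then (1 : ℝ) else 0)) ^ 2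

/-!
Pointwise in `u`, the integrand of `CRPS` is the square loss `(p - h)²` of a forecast
`p ∈ [0,1]` of an outcome `h ∈ {0,1}`, and the substitution `P = 1/2 - (1/4) log (A / B)`, with
`A = ∑ qᵢ e^{-2pᵢ²}` and `B = ∑ qᵢ e^{-2(1-pᵢ)²}`, shows that this loss is `2`-mixable: `P` is
chosen so that `e^{2P²} A = e^{2(1-P)²} B`, and this common value equals
`(1-P) e^{2P²} A + P e^{2(1-P)²} B ≤ 1`, which holds termwise by Hoeffding's lemma for a
Bernoulli(`P`) variable. Mixability survives averaging over `u` uniformly on `(a, b]`, since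
`∑ qᵢ e^{E xᵢ} ≤ e^{E log ∑ qᵢ e^{xᵢ}}` by Jensen.
-/

open Real MeasureTheory ProbabilityTheory Set

/-- Hoeffding's lemma for a Bernoulli(`p`) variable. -/
theorem one_sub_mul_exp_add_mul_exp_le {p : ℝ} (hp : p ∈ Icc (0 : ℝ) 1) (t : ℝ) :
    (1 - p) * exp (-(p * t)) + p * exp ((1 - p) * t) ≤ exp (t ^ 2 / 8) := by
  set μ : Measure Bool :=
    ENNReal.ofReal (1 - p) • Measure.dirac false + ENNReal.ofReal p • Measure.dirac true
  have : IsProbabilityMeasure μ :=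
    ⟨by simp [μ, ← ENNReal.ofReal_add (sub_nonneg.2 hp.2) hp.1]⟩
  have integral_eq (f : Bool → ℝ) : ∫ b, f b ∂μ = (1 - p) * f false + p * f true := by
    rw [integral_fintype .of_finite]
    simp [μ, measureReal_def, ENNReal.toReal_ofReal (sub_nonneg.2 hp.2),
      ENNReal.toReal_ofReal hp.1]
    ring
  set X : Bool → ℝ := fun b => if b then 1 else 0
  have hX : ∀ᵐ b ∂μ, X b ∈ Icc (0 : ℝ) 1 := ae_of_all _ fun b => by cases b <;> simp [X]
  calc _ = mgf (fun b => X b - μ[X]) μ t := by simp [mgf, integral_eq, X]; ring_nf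
    _ ≤ _ := (hasSubgaussianMGF_of_mem_Icc (measurable_of_finite X).aemeasurable hX).mgf_le t
    _ = exp (t ^ 2 / 8) := by norm_num; ring_nf

theorem one_sub_mul_exp_add_mul_exp_sq_le_one {P : ℝ} (hP : P ∈ Icc (0 : ℝ) 1) (z : ℝ) :
    (1 - P) * (exp (2 * P ^ 2) * exp (-2 * z ^ 2))
      + P * (exp (2 * (1 - P) ^ 2) * exp (-2 * (1 - z) ^ 2)) ≤ 1 := by
  set w := 4 * (z - P) with hw
  rw [← exp_add, ← exp_add,
    show 2 * P ^ 2 + -2 * z ^ 2 = -2 * (z - P) ^ 2 + -(P * w) by ring,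
    show 2 * (1 - P) ^ 2 + -2 * (1 - z) ^ 2 = -2 * (z - P) ^ 2 + (1 - P) * w by ring,
    exp_add, exp_add]
  calc _ = exp (-2 * (z - P) ^ 2) * ((1 - P) * exp (-(P * w)) + P * exp ((1 - P) * w)) := by
        ring
    _ ≤ exp (-2 * (z - P) ^ 2) * exp (w ^ 2 / 8) := by
        gcongr; exact one_sub_mul_exp_add_mul_exp_le hP w
    _ = 1 := by rw [← exp_add, ← exp_zero, hw]; ring_nf

theorem neg_two_mul_sq_sub_mem_Icc {x h : ℝ} (hx : x ∈ Icc (0 : ℝ) 1) (hh : h ∈ Icc (0 : ℝ) 1) :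
    -2 * (x - h) ^ 2 ∈ Icc (-2 : ℝ) 0 :=
  ⟨by nlinarith [hx.1, hx.2, hh.1, hh.2], by nlinarith [sq_nonneg (x - h)]⟩

section Mixture

variable {ι : Type*} [Fintype ι] {q : ι → ℝ}

theorem sum_mul_exp_pos (hq0 : ∀ i, 0 ≤ q i) (hq1 : ∑ i, q i = 1) (v : ι → ℝ) :
    0 < ∑ i, q i * exp (v i) := by
  obtain ⟨i, -, hi⟩ := Finset.exists_lt_of_sum_lt (s := .univ) (f := 0) (g := q)
    (by simp [hq1])
  exact Finset.sum_pos' (fun i _ => mul_nonneg (hq0 i) (exp_nonneg _))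
    ⟨i, Finset.mem_univ i, mul_pos hi (exp_pos _)⟩

theorem sum_mul_exp_mem_Icc (hq0 : ∀ i, 0 ≤ q i) (hq1 : ∑ i, q i = 1) {v : ι → ℝ} {m M : ℝ}
    (hv : ∀ i, v i ∈ Icc m M) : ∑ i, q i * exp (v i) ∈ Icc (exp m) (exp M) := by
  constructor
  · calc exp m = ∑ i, q i * exp m := by rw [← Finset.sum_mul, hq1, one_mul]
      _ ≤ ∑ i, q i * exp (v i) := by gcongr with i; exacts [hq0 i, (hv i).1]
  · calc ∑ i, q i * exp (v i) ≤ ∑ i, q i * exp M := by gcongr with i; exacts [hq0 i, (hv i).2]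
      _ = exp M := by rw [← Finset.sum_mul, hq1, one_mul]

theorem log_sum_mul_exp_mem_Icc (hq0 : ∀ i, 0 ≤ q i) (hq1 : ∑ i, q i = 1) {v : ι → ℝ}
    {m M : ℝ} (hv : ∀ i, v i ∈ Icc m M) : log (∑ i, q i * exp (v i)) ∈ Icc m M := by
  obtain ⟨hm, hM⟩ := sum_mul_exp_mem_Icc hq0 hq1 hv
  constructor
  · simpa using log_le_log (exp_pos m) hm
  · simpa using log_le_log ((exp_pos m).trans_le hm) hM

noncomputable def brierSubst (q p : ι → ℝ) : ℝ :=
  1 / 2 - (1 / 4) * Real.log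
    ((∑ i, q i * Real.exp (-2 * (p i) ^ 2)) / (∑ i, q i * Real.exp (-2 * (1 - p i) ^ 2)))

theorem brierSubst_mem_Icc (hq0 : ∀ i, 0 ≤ q i) (hq1 : ∑ i, q i = 1) {p : ι → ℝ}
    (hp : ∀ i, p i ∈ Icc (0 : ℝ) 1) : brierSubst q p ∈ Icc (0 : ℝ) 1 := by
  have hA := log_sum_mul_exp_mem_Icc hq0 hq1 (v := fun i => -2 * p i ^ 2) fun i => by
    simpa only [sub_zero] using neg_two_mul_sq_sub_mem_Icc (hp i) (left_mem_Icc.2 zero_le_one)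
  have hB := log_sum_mul_exp_mem_Icc hq0 hq1 fun i =>
    neg_two_mul_sq_sub_mem_Icc (right_mem_Icc.2 zero_le_one) (hp i)
  rw [brierSubst, log_div (sum_mul_exp_pos hq0 hq1 _).ne' (sum_mul_exp_pos hq0 hq1 _).ne']
  constructor <;> linarith [hA.1, hA.2, hB.1, hB.2]

theorem exp_sq_brierSubst_mul_sum_eq (hq0 : ∀ i, 0 ≤ q i) (hq1 : ∑ i, q i = 1) (p : ι → ℝ) :
    exp (2 * brierSubst q p ^ 2) * ∑ i, q i * exp (-2 * p i ^ 2)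
      = exp (2 * (1 - brierSubst q p) ^ 2) * ∑ i, q i * exp (-2 * (1 - p i) ^ 2) := by
  have hA := sum_mul_exp_pos hq0 hq1 fun i => -2 * p i ^ 2
  have hB := sum_mul_exp_pos hq0 hq1 fun i => -2 * (1 - p i) ^ 2
  rw [← exp_log hA, ← exp_log hB, ← exp_add, ← exp_add, brierSubst, log_div hA.ne' hB.ne']
  ring_nf

theorem sum_mul_exp_le_exp_brierSubst (hq0 : ∀ i, 0 ≤ q i) (hq1 : ∑ i, q i = 1) {p : ι → ℝ}
    (hp : ∀ i, p i ∈ Icc (0 : ℝ) 1) {h : ℝ} (hh : h = 0 ∨ h = 1) :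
    ∑ i, q i * exp (-2 * (p i - h) ^ 2) ≤ exp (-2 * (brierSubst q p - h) ^ 2) := by
  set P := brierSubst q p
  set A := ∑ i, q i * exp (-2 * p i ^ 2)
  set B := ∑ i, q i * exp (-2 * (1 - p i) ^ 2)
  have hP : P ∈ Icc (0 : ℝ) 1 := brierSubst_mem_Icc hq0 hq1 hp
  have hconvex : (1 - P) * (exp (2 * P ^ 2) * A) + P * (exp (2 * (1 - P) ^ 2) * B) ≤ 1 :=
    calc _ = ∑ i, q i * ((1 - P) * (exp (2 * P ^ 2) * exp (-2 * p i ^ 2))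
              + P * (exp (2 * (1 - P) ^ 2) * exp (-2 * (1 - p i) ^ 2))) := by
          simp only [A, B, Finset.mul_sum, ← Finset.sum_add_distrib]
          exact Finset.sum_congr rfl fun i _ => by ring
      _ ≤ ∑ i, q i * 1 := by
          gcongr with i
          · exact hq0 i
          · exact one_sub_mul_exp_add_mul_exp_sq_le_one hP (p i)
      _ = 1 := by rw [← Finset.sum_mul, hq1, one_mul]
  have hbalance : exp (2 * P ^ 2) * A = exp (2 * (1 - P) ^ 2) * B :=
    exp_sq_brierSubst_mul_sum_eq hq0 hq1 p
  rcases hh with rfl | rfl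
  · have hA : exp (2 * P ^ 2) * A ≤ 1 := by rw [← hbalance] at hconvex; linarith
    simp only [sub_zero]
    rwa [neg_mul, exp_neg, inv_eq_one_div, le_div_iff₀' (exp_pos _)]
  · have hB : exp (2 * (1 - P) ^ 2) * B ≤ 1 := by rw [hbalance] at hconvex; linarith
    simp only [sub_sq_comm _ (1 : ℝ)]
    rwa [neg_mul, exp_neg, inv_eq_one_div, le_div_iff₀' (exp_pos _)]

end Mixture

section Expectation

variable {Ω : Type*} [MeasurableSpace Ω] {μ : Measure Ω} [IsProbabilityMeasure μ]

theorem exp_integral_le_integral_exp {f : Ω → ℝ} (hf : Integrable f μ)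
    (hef : Integrable (fun ω => exp (f ω)) μ) : exp (∫ ω, f ω ∂μ) ≤ ∫ ω, exp (f ω) ∂μ :=
  convexOn_exp.map_integral_le continuous_exp.continuousOn isClosed_univ
    (ae_of_all _ fun _ => mem_univ _) hf hef

variable {ι : Type*} [Fintype ι] {q : ι → ℝ}

theorem integrable_log_sum_mul_exp (hq0 : ∀ i, 0 ≤ q i) (hq1 : ∑ i, q i = 1)
    {x : ι → Ω → ℝ} (hx : ∀ i, Measurable (x i)) {m M : ℝ} (hxb : ∀ i ω, x i ω ∈ Icc m M) :
    Integrable (fun ω => log (∑ i, q i * exp (x i ω))) μ :=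
  .of_mem_Icc m M (by fun_prop) (ae_of_all _ fun ω => log_sum_mul_exp_mem_Icc hq0 hq1 (hxb · ω))

/-- Jensen for `exp` applied to `x i - L`, where `L = log ∑ q i exp (x i)` makes the weights
`q i * exp (x i - L)` sum to one at every point. -/
theorem sum_mul_exp_integral_le_exp_integral_log (hq0 : ∀ i, 0 ≤ q i) (hq1 : ∑ i, q i = 1)
    {x : ι → Ω → ℝ} (hx : ∀ i, Measurable (x i)) {m M : ℝ} (hxb : ∀ i ω, x i ω ∈ Icc m M) :
    ∑ i, q i * exp (∫ ω, x i ω ∂μ) ≤ exp (∫ ω, log (∑ i, q i * exp (x i ω)) ∂μ) := by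
  set L := fun ω => log (∑ i, q i * exp (x i ω))
  have hL : ∀ ω, L ω ∈ Icc m M := fun ω => log_sum_mul_exp_mem_Icc hq0 hq1 (hxb · ω)
  have hLi : Integrable L μ := integrable_log_sum_mul_exp hq0 hq1 hx hxb
  set f := fun i ω => x i ω - L ω
  have hf : ∀ i ω, f i ω ∈ Icc (m - M) (M - m) := fun i ω =>
    ⟨by linarith [(hxb i ω).1, (hL ω).2], by linarith [(hxb i ω).2, (hL ω).1]⟩
  have hfi : ∀ i, Integrable (f i) μ := fun i =>
    .of_mem_Icc _ _ (by fun_prop) (ae_of_all _ (hf i))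
  have hefi : ∀ i, Integrable (fun ω => exp (f i ω)) μ := fun i =>
    .of_mem_Icc _ _ (by fun_prop)
      (ae_of_all _ fun ω => ⟨exp_le_exp.2 (hf i ω).1, exp_le_exp.2 (hf i ω).2⟩)
  have hsum : ∀ ω, ∑ i, q i * exp (f i ω) = 1 := fun ω => by
    simp only [f, L, exp_sub, exp_log (sum_mul_exp_pos hq0 hq1 _), mul_div_assoc',
      ← Finset.sum_div]
    exact div_self (sum_mul_exp_pos hq0 hq1 _).ne'
  calc ∑ i, q i * exp (∫ ω, x i ω ∂μ)
      = ∑ i, q i * exp (∫ ω, f i ω ∂μ) * exp (∫ ω, L ω ∂μ) := by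
        refine Finset.sum_congr rfl fun i _ => ?_
        have hxi : Integrable (x i) μ := .of_mem_Icc m M (hx i).aemeasurable (ae_of_all _ (hxb i))
        rw [mul_assoc, ← exp_add, integral_sub hxi hLi, sub_add_cancel]
    _ ≤ ∑ i, q i * (∫ ω, exp (f i ω) ∂μ) * exp (∫ ω, L ω ∂μ) := by
        gcongr with i
        · exact hq0 i
        · exact exp_integral_le_integral_exp (hfi i) (hefi i)
    _ = exp (∫ ω, L ω ∂μ) := by
        rw [← Finset.sum_mul, ← Finset.sum_congr rfl fun i _ => integral_const_mul (q i) _,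
          ← integral_finsetSum _ fun i _ => (hefi i).const_mul (q i)]
        simp [hsum]

theorem sum_mul_exp_integral_le_exp_integral_brierSubst (hq0 : ∀ i, 0 ≤ q i)
    (hq1 : ∑ i, q i = 1) {p : ι → Ω → ℝ} (hp_meas : ∀ i, Measurable (p i))
    (hp : ∀ i ω, p i ω ∈ Icc (0 : ℝ) 1) {H : Ω → ℝ} (hH_meas : Measurable H)
    (hH : ∀ ω, H ω = 0 ∨ H ω = 1) :
    ∑ i, q i * exp (∫ ω, -2 * (p i ω - H ω) ^ 2 ∂μ)
      ≤ exp (∫ ω, -2 * (brierSubst q (p · ω) - H ω) ^ 2 ∂μ) := by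
  have hH01 : ∀ ω, H ω ∈ Icc (0 : ℝ) 1 := fun ω => by rcases hH ω with h | h <;> simp [h]
  have hloss : ∀ i ω, -2 * (p i ω - H ω) ^ 2 ∈ Icc (-2 : ℝ) 0 := fun i ω =>
    neg_two_mul_sq_sub_mem_Icc (hp i ω) (hH01 ω)
  refine (sum_mul_exp_integral_le_exp_integral_log hq0 hq1 (by fun_prop) hloss).trans
    (exp_le_exp.2 (integral_mono (integrable_log_sum_mul_exp hq0 hq1 (by fun_prop) hloss)
      ?_ fun ω => ?_))
  · refine .of_mem_Icc (-2) 0 ?_ (ae_of_all _ fun ω =>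
      neg_two_mul_sq_sub_mem_Icc (brierSubst_mem_Icc hq0 hq1 (hp · ω)) (hH01 ω))
    unfold brierSubst
    fun_prop
  · exact (log_le_iff_le_exp (sum_mul_exp_pos hq0 hq1 _)).2
      (sum_mul_exp_le_exp_brierSubst hq0 hq1 (hp · ω) (hH ω))

end Expectation

theorem DistFunc.mem_Icc {a b : ℝ} {F : ℝ → ℝ} (hF : DistFunc a b F) {u : ℝ}
    (hu : u ∈ Icc a b) : F u ∈ Icc (0 : ℝ) 1 := by
  have hab : a ≤ b := hu.1.trans hu.2
  constructor
  · simpa [hF.2.1] using hF.1 (left_mem_Icc.2 hab) hu hu.1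
  · simpa [hF.2.2] using hF.1 hu (right_mem_Icc.2 hab) hu.2

theorem DistFunc.monotone_comp_projIcc {a b : ℝ} {F : ℝ → ℝ} (hF : DistFunc a b F)
    (hab : a ≤ b) : Monotone fun u => F (projIcc a b hab u) := fun _ _ huv =>
  hF.1 (projIcc a b hab _).2 (projIcc a b hab _).2 (monotone_projIcc hab huv)

theorem CRPS_congr {a b : ℝ} {Φ Ψ : ℝ → ℝ} (h : EqOn Φ Ψ (uIcc a b)) (y : ℝ) :
    CRPS a b Φ y = CRPS a b Ψ y :=
  intervalIntegral.integral_congr fun u hu => by simp only [h hu]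

theorem CRPS_eq_mul_integral_cond {a b : ℝ} (hab : a < b) (Φ : ℝ → ℝ) (y : ℝ) :
    CRPS a b Φ y = (b - a) * ∫ u, (Φ u - if y ≤ u then 1 else 0) ^ 2 ∂volume[|Ioc a b] := by
  rw [CRPS, intervalIntegral.integral_of_le hab.le, ProbabilityTheory.cond,
    integral_smul_measure, Real.volume_Ioc, ENNReal.toReal_inv,
    ENNReal.toReal_ofReal (sub_nonneg.2 hab.le), smul_eq_mul,
    mul_inv_cancel_left₀ (sub_ne_zero.2 hab.ne')]

theorem crps_mixable_general (a b : ℝ) (hab : a < b) (N : ℕ)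
    (q : Fin N → ℝ) (hq0 : ∀ i, 0 ≤ q i) (hq1 : ∑ i, q i = 1)
    (Fi : Fin N → ℝ → ℝ) (hFi : ∀ i, DistFunc a b (Fi i))
    (F : ℝ → ℝ)
    (hF : ∀ u ∈ Set.Icc a b, F u = 1 / 2 - (1 / 4) * Real.log
      ((∑ i, q i * Real.exp (-2 * (Fi i u) ^ 2)) /
        (∑ i, q i * Real.exp (-2 * (1 - Fi i u) ^ 2)))) :
    ∀ y ∈ Set.Icc a b,
      Real.exp (-(2 / (b - a)) * CRPS a b F y) ≥
        ∑ i, q i * Real.exp (-(2 / (b - a)) * CRPS a b (Fi i) y) := by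
  intro y _
  have : IsProbabilityMeasure (volume[|Ioc a b]) :=
    cond_isProbabilityMeasure_of_finite (by simp [hab]) (by simp)
  -- outside `[a, b]` the `Fi i` are arbitrary (even non-measurable): clamp their argument
  set p : Fin N → ℝ → ℝ := fun i u => Fi i (projIcc a b hab.le u)
  have hpF : ∀ i, EqOn (Fi i) (p i) (uIcc a b) := fun i u hu => by
    rw [uIcc_of_le hab.le] at hu
    simp [p, projIcc_of_mem hab.le hu]
  have hFp : EqOn F (fun u => brierSubst q (p · u)) (uIcc a b) := fun u hu => by
    simp only [hF u (uIcc_of_le hab.le ▸ hu), brierSubst, hpF _ hu]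
  set H : ℝ → ℝ := fun u => if y ≤ u then 1 else 0
  have hscore : ∀ Φ, -(2 / (b - a)) * CRPS a b Φ y
      = ∫ u, -2 * (Φ u - H u) ^ 2 ∂volume[|Ioc a b] := fun Φ => by
    rw [CRPS_eq_mul_integral_cond hab, integral_const_mul]
    field_simp [sub_ne_zero.2 hab.ne']
    rfl
  rw [ge_iff_le, CRPS_congr hFp, hscore]
  simp_rw [CRPS_congr (hpF _), hscore]
  exact sum_mul_exp_integral_le_exp_integral_brierSubst hq0 hq1
    (fun i => ((hFi i).monotone_comp_projIcc hab.le).measurable)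
    (fun i u => (hFi i).mem_Icc (projIcc a b hab.le u).2)
    (Measurable.ite measurableSet_Ici measurable_const measurable_const)
    (fun u => by by_cases y ≤ u <;> simp [H, *])

/-- `CRPS` is `2/(b-a)`-mixable, witnessed by the substitution rule
`F(u) = 1/2 - (1/4) ln (Σ q_i e^{-2 F_i(u)²} / Σ q_i e^{-2 (1-F_i(u))²})`. -/
theorem crps_mixable (a b : ℝ) (hab : a < b) (N : ℕ) (hN : 1 ≤ N)
    (q : Fin N → ℝ) (hq0 : ∀ i, 0 ≤ q i) (hq1 : ∑ i, q i = 1)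
    (Fi : Fin N → ℝ → ℝ) (hFi : ∀ i, DistFunc a b (Fi i))
    (F : ℝ → ℝ)
    (hF : ∀ u ∈ Set.Icc a b, F u = 1 / 2 - (1 / 4) * Real.log
      ((∑ i, q i * Real.exp (-2 * (Fi i u) ^ 2)) /
        (∑ i, q i * Real.exp (-2 * (1 - Fi i u) ^ 2)))) :
    ∀ y ∈ Set.Icc a b,
      Real.exp (-(2 / (b - a)) * CRPS a b F y) ≥
        ∑ i, q i * Real.exp (-(2 / (b - a)) * CRPS a b (Fi i) y) :=
  crps_mixable_general a b hab N q hq0 hq1 Fi hFi F hF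
end

section
/- Let a < b, let F be a distribution function on [a,b], let d ≥ 1, Δ = (b−a)/d, and z_s = a + sΔ for 0 ≤ s ≤ d. Let f_s = F(z_s) for 1 ≤ s ≤ d, and define the piecewise-constant function L : [a,b] → ℝ by L(u) = f_s for u ∈ [z_{s−1}, z_s) (1 ≤ s ≤ d) and L(b) = 1. For y ∈ [a,b] let ω_y^s = H(z_s − y) ∈ {0,1} for 1 ≤ s ≤ d. Then for every y ∈ [a,b] one has |CRPS(L, y) − Δ · Σ_{s=1}^d (f_s − ω_y^s)²| ≤ 2Δ. -/
/-!
Write `H` for the Heaviside step `u ↦ [y ≤ u]`. Since `H² = H`, on a cell where `L ≡ f` the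
integrand is `(f - H)² = f² + (1 - 2f) H`: the `f²` part is integrated exactly by the
right-endpoint rule, so the error on the cell is `(1 - 2f)` times the right-endpoint quadrature
error of `H`, which is at most that error because `0 ≤ f ≤ 1`. As `H` is monotone these errors
are nonnegative and telescope to at most `Δ (H b - H a) ≤ Δ`.
-/

open MeasureTheory Set Finset

lemma monotone_ite_le (y : ℝ) : Monotone fun u : ℝ => if y ≤ u then (1 : ℝ) else 0 := by
  intro u v huv
  by_cases hu : y ≤ u
  · simp [hu, hu.trans huv]
  · by_cases hv : y ≤ v <;> simp [hu, hv]

lemma sq_sub_ite_le (f y u : ℝ) :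
    (f - if y ≤ u then (1 : ℝ) else 0) ^ 2 = f ^ 2 + (1 - 2 * f) * if y ≤ u then 1 else 0 := by
  split_ifs <;> ring

lemma Monotone.sum_mul_sub_integral_le {g : ℝ → ℝ} (hg : Monotone g) {Δ : ℝ} (hΔ : 0 ≤ Δ)
    {z : ℕ → ℝ} (hz : ∀ i, z (i + 1) = z i + Δ) (n : ℕ) :
    ∑ i ∈ range n, (Δ * g (z (i + 1)) - ∫ u in z i..z (i + 1), g u) ≤ Δ * (g (z n) - g (z 0)) := by
  have hcell : ∀ i, Δ * g (z i) ≤ ∫ u in z i..z (i + 1), g u := fun i => by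
    calc Δ * g (z i) = ∫ _ in z i..z (i + 1), g (z i) := by
          rw [intervalIntegral.integral_const, smul_eq_mul, hz]; ring
      _ ≤ ∫ u in z i..z (i + 1), g u :=
          intervalIntegral.integral_mono_on (by linarith [hz i]) intervalIntegrable_const
            hg.intervalIntegrable fun u hu => hg hu.1
  calc ∑ i ∈ range n, (Δ * g (z (i + 1)) - ∫ u in z i..z (i + 1), g u)
      ≤ ∑ i ∈ range n, (Δ * g (z (i + 1)) - Δ * g (z i)) := by
        gcongr with i
        exact hcell i
    _ = Δ * (g (z n) - g (z 0)) := by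
        rw [sum_range_sub (fun i => Δ * g (z i)), mul_sub]

section Cell

variable {L : ℝ → ℝ} {c e f : ℝ} (y : ℝ)

lemma eqOn_sq_sub_ite_le_of_eqOn_Ico (hL : ∀ u ∈ Ico c e, L u = f) :
    EqOn (fun u => (L u - if y ≤ u then (1 : ℝ) else 0) ^ 2)
      (fun u => f ^ 2 + (1 - 2 * f) * if y ≤ u then 1 else 0) (Ioo c e) := by
  intro u hu
  simp only [hL u (Ioo_subset_Ico_self hu), sq_sub_ite_le]

lemma intervalIntegrable_sq_sub_ite_le (hce : c ≤ e) (hL : ∀ u ∈ Ico c e, L u = f) :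
    IntervalIntegrable (fun u => (L u - if y ≤ u then (1 : ℝ) else 0) ^ 2) volume c e := by
  have hstep : IntervalIntegrable (fun u => f ^ 2 + (1 - 2 * f) * if y ≤ u then (1 : ℝ) else 0)
      volume c e :=
    intervalIntegrable_const.add ((monotone_ite_le y).intervalIntegrable.const_mul _)
  rw [intervalIntegrable_iff_integrableOn_Ioo_of_le hce] at hstep ⊢
  exact hstep.congr_fun (eqOn_sq_sub_ite_le_of_eqOn_Ico y hL).symm measurableSet_Ioo

lemma integral_sq_sub_ite_le (hce : c ≤ e) (hL : ∀ u ∈ Ico c e, L u = f) :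
    ∫ u in c..e, (L u - if y ≤ u then (1 : ℝ) else 0) ^ 2 =
      (e - c) * f ^ 2 + (1 - 2 * f) * ∫ u in c..e, if y ≤ u then (1 : ℝ) else 0 := by
  rw [intervalIntegral.integral_congr_Ioo_of_le hce (eqOn_sq_sub_ite_le_of_eqOn_Ico y hL),
    intervalIntegral.integral_add intervalIntegrable_const
      ((monotone_ite_le y).intervalIntegrable.const_mul _),
    intervalIntegral.integral_const, intervalIntegral.integral_const_mul, smul_eq_mul]

lemma abs_integral_sq_sub_ite_le_sub_le (hce : c ≤ e) (hf₀ : 0 ≤ f) (hf₁ : f ≤ 1)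
    (hL : ∀ u ∈ Ico c e, L u = f) :
    |(∫ u in c..e, (L u - if y ≤ u then (1 : ℝ) else 0) ^ 2) -
        (e - c) * (f - if y ≤ e then (1 : ℝ) else 0) ^ 2| ≤
      (e - c) * (if y ≤ e then (1 : ℝ) else 0) - ∫ u in c..e, if y ≤ u then (1 : ℝ) else 0 := by
  have hint_le : (∫ u in c..e, if y ≤ u then (1 : ℝ) else 0) ≤
      (e - c) * if y ≤ e then (1 : ℝ) else 0 := by
    calc (∫ u in c..e, if y ≤ u then (1 : ℝ) else 0)
        ≤ ∫ _ in c..e, if y ≤ e then (1 : ℝ) else 0 :=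
          intervalIntegral.integral_mono_on hce (monotone_ite_le y).intervalIntegrable
            intervalIntegrable_const fun u hu => monotone_ite_le y hu.2
      _ = (e - c) * if y ≤ e then (1 : ℝ) else 0 := by
          rw [intervalIntegral.integral_const, smul_eq_mul]
  have hcoef : |1 - 2 * f| ≤ 1 := abs_le.mpr ⟨by linarith, by linarith⟩
  rw [integral_sq_sub_ite_le y hce hL, sq_sub_ite_le]
  calc |(e - c) * f ^ 2 + (1 - 2 * f) * (∫ u in c..e, if y ≤ u then (1 : ℝ) else 0) -
        (e - c) * (f ^ 2 + (1 - 2 * f) * if y ≤ e then 1 else 0)|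
      = |1 - 2 * f| * ((e - c) * (if y ≤ e then (1 : ℝ) else 0) -
          ∫ u in c..e, if y ≤ u then (1 : ℝ) else 0) := by
        rw [← abs_of_nonneg (sub_nonneg.mpr hint_le), ← abs_mul, abs_sub_comm]
        congr 1
        ring
    _ ≤ _ := mul_le_of_le_one_left (sub_nonneg.mpr hint_le) hcoef

lemma abs_integral_sq_sub_ite_le_sub_sum_le {Δ : ℝ} (hΔ : 0 ≤ Δ) {z : ℕ → ℝ}
    (hz : ∀ i, z (i + 1) = z i + Δ) {n : ℕ} {f : ℕ → ℝ} (hf₀ : ∀ i < n, 0 ≤ f i)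
    (hf₁ : ∀ i < n, f i ≤ 1) (hL : ∀ i < n, ∀ u ∈ Ico (z i) (z (i + 1)), L u = f i) :
    |(∫ u in z 0..z n, (L u - if y ≤ u then (1 : ℝ) else 0) ^ 2) -
        Δ * ∑ i ∈ range n, (f i - if y ≤ z (i + 1) then (1 : ℝ) else 0) ^ 2| ≤ Δ := by
  have hwidth : ∀ i, z (i + 1) - z i = Δ := fun i => by rw [hz]; ring
  have hstep : ∀ i, z i ≤ z (i + 1) := fun i => by linarith [hz i]
  rw [← intervalIntegral.sum_integral_adjacent_intervals fun i hi =>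
      intervalIntegrable_sq_sub_ite_le y (hstep i) (hL i hi), mul_sum, ← sum_sub_distrib]
  calc _ ≤ ∑ i ∈ range n, |(∫ u in z i..z (i + 1), (L u - if y ≤ u then (1 : ℝ) else 0) ^ 2) -
          Δ * (f i - if y ≤ z (i + 1) then (1 : ℝ) else 0) ^ 2| :=
        abs_sum_le_sum_abs _ _
    _ ≤ ∑ i ∈ range n, (Δ * (if y ≤ z (i + 1) then (1 : ℝ) else 0) -
          ∫ u in z i..z (i + 1), if y ≤ u then (1 : ℝ) else 0) :=
        sum_le_sum fun i hi => by
          rw [Finset.mem_range] at hi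
          simpa only [hwidth] using
            abs_integral_sq_sub_ite_le_sub_le y (hstep i) (hf₀ i hi) (hf₁ i hi) (hL i hi)
    _ ≤ Δ * ((if y ≤ z n then (1 : ℝ) else 0) - if y ≤ z 0 then (1 : ℝ) else 0) :=
        (monotone_ite_le y).sum_mul_sub_integral_le hΔ hz n
    _ ≤ Δ := by split_ifs <;> linarith

end Cell

theorem crps_discretization_general (a b : ℝ) (hab : a < b)
    (F : ℝ → ℝ) (hF : DistFunc a b F) (d : ℕ) (hd : 1 ≤ d)
    (L : ℝ → ℝ)
    (hL : ∀ s : ℕ, 1 ≤ s → s ≤ d →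
      ∀ u ∈ Set.Ico (a + ((s : ℝ) - 1) * ((b - a) / d)) (a + (s : ℝ) * ((b - a) / d)),
        L u = F (a + (s : ℝ) * ((b - a) / d))) :
    ∀ y ∈ Set.Icc a b,
      |CRPS a b L y - ((b - a) / d) * ∑ s ∈ Finset.Icc 1 d,
          (F (a + (s : ℝ) * ((b - a) / d)) -
            (if y ≤ a + (s : ℝ) * ((b - a) / d) then (1 : ℝ) else 0)) ^ 2| ≤
        2 * ((b - a) / d) := by
  intro y _
  obtain ⟨hmono, hFa, hFb⟩ := hF
  set Δ := (b - a) / d with hΔ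
  have hΔ₀ : 0 ≤ Δ := div_nonneg (sub_pos.mpr hab).le (Nat.cast_nonneg d)
  set z : ℕ → ℝ := fun i => a + i * Δ
  have hzd : z d = b := by
    simp only [z, hΔ]; field_simp [(Nat.cast_pos.mpr hd).ne']; ring
  have hz_mem : ∀ i ≤ d, z i ∈ Icc a b := fun i hi =>
    ⟨le_add_of_nonneg_right (by positivity), by rw [← hzd]; simp only [z]; gcongr⟩
  have hcell : ∀ i < d, ∀ u ∈ Ico (z i) (z (i + 1)), L u = F (z (i + 1)) := fun i hi u hu => by
    simpa [z] using hL (i + 1) (by omega) hi u (by simpa [z] using hu)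
  have hf₀ : ∀ i < d, 0 ≤ F (z (i + 1)) := fun i hi =>
    hFa ▸ hmono (left_mem_Icc.mpr hab.le) (hz_mem _ hi) (hz_mem _ hi).1
  have hf₁ : ∀ i < d, F (z (i + 1)) ≤ 1 := fun i hi =>
    hFb ▸ hmono (hz_mem _ hi) (right_mem_Icc.mpr hab.le) (hz_mem _ hi).2
  have hbound := abs_integral_sq_sub_ite_le_sub_sum_le y hΔ₀
    (fun i => by simp only [z]; push_cast; ring) hf₀ hf₁ hcell
  rw [show z 0 = a by simp [z], hzd] at hbound
  rw [range_eq_Ico, sum_Ico_add' fun s => (F (z s) - if y ≤ z s then (1 : ℝ) else 0) ^ 2,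
    zero_add, Finset.Ico_add_one_right_eq_Icc] at hbound
  exact hbound.trans (by linarith)

/-- The CRPS of the piecewise-constant approximation `L` of `F` on the uniform grid
`z_s = a + s·Δ`, `Δ = (b-a)/d`, differs from the discretized square-loss sum
`Δ · Σ_{s=1}^d (f_s - ω_y^s)²` (with `f_s = F z_s` and `ω_y^s = H(z_s - y)`)
by at most `2Δ`. -/
theorem crps_discretization (a b : ℝ) (hab : a < b)
    (F : ℝ → ℝ) (hF : DistFunc a b F) (d : ℕ) (hd : 1 ≤ d)
    (L : ℝ → ℝ)
    (hL : ∀ s : ℕ, 1 ≤ s → s ≤ d →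
      ∀ u ∈ Set.Ico (a + ((s : ℝ) - 1) * ((b - a) / d)) (a + (s : ℝ) * ((b - a) / d)),
        L u = F (a + (s : ℝ) * ((b - a) / d)))
    (hLb : L b = 1) :
    ∀ y ∈ Set.Icc a b,
      |CRPS a b L y - ((b - a) / d) * ∑ s ∈ Finset.Icc 1 d,
          (F (a + (s : ℝ) * ((b - a) / d)) -
            (if y ≤ a + (s : ℝ) * ((b - a) / d) then (1 : ℝ) else 0)) ^ 2| ≤
        2 * ((b - a) / d) :=
  crps_discretization_general a b hab F hF d hd L hL
end

section
/- Let η > 0, N ≥ 1, T ≥ 1, and let real numbers h_t and l_{i,t} (1 ≤ i ≤ N, 1 ≤ t ≤ T) be given. Define weights by w_{i,1} = 1/N and w_{i,t+1} = w_{i,t} · e^{−η l_{i,t}}, and normalized weights w*_{i,t} = w_{i,t} / Σ_{j=1}^N w_{j,t}. Assume that for each t one has exp(−η h_t) ≥ Σ_{i=1}^N w*_{i,t} · exp(−η l_{i,t}). Then for every i with 1 ≤ i ≤ N: Σ_{t=1}^T h_t ≤ Σ_{t=1}^T l_{i,t} + (ln N)/η. -/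
/-!
The total weight `W t = ∑ i, w i t` starts at `1`, and the mixability hypothesis says exactly
that one step multiplies it by at most `exp (-η h t)`; hence `W (T + 1) ≤ exp (-η ∑ h)`.
On the other hand `W (T + 1)` dominates the single weight `w i (T + 1) = exp (-η ∑ l i) / N`.
Taking logarithms gives the regret bound.
-/

open Finset Real

section Telescoping

variable {f g : ℕ → ℝ}

theorem eq_mul_prod_Icc_of_succ_eq (hf : ∀ t, 1 ≤ t → f (t + 1) = f t * g t) (T : ℕ) :
    f (T + 1) = f 1 * ∏ t ∈ Icc 1 T, g t := by
  induction T with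
  | zero => simp
  | succ n ih => rw [hf (n + 1) (by omega), ih, prod_Icc_succ_top (by omega), mul_assoc]

theorem le_mul_prod_Icc_of_succ_le {T : ℕ} (hg : ∀ t ∈ Icc 1 T, 0 ≤ g t)
    (hf : ∀ t ∈ Icc 1 T, f (t + 1) ≤ f t * g t) :
    f (T + 1) ≤ f 1 * ∏ t ∈ Icc 1 T, g t := by
  induction T with
  | zero => simp
  | succ n ih =>
    have hIcc : Icc 1 n ⊆ Icc 1 (n + 1) := Icc_subset_Icc_right n.le_succ
    have hlast : n + 1 ∈ Icc 1 (n + 1) := by simp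
    calc f (n + 1 + 1) ≤ f (n + 1) * g (n + 1) := hf _ hlast
      _ ≤ (f 1 * ∏ t ∈ Icc 1 n, g t) * g (n + 1) :=
          mul_le_mul_of_nonneg_right (ih (fun t ht ↦ hg t (hIcc ht))
            (fun t ht ↦ hf t (hIcc ht))) (hg _ hlast)
      _ = f 1 * ∏ t ∈ Icc 1 (n + 1), g t := by rw [prod_Icc_succ_top (by omega), mul_assoc]

end Telescoping

theorem sum_mul_le_of_sum_div_mul_le {ι : Type*} [Fintype ι] {v x : ι → ℝ} {c : ℝ}
    (hv : 0 < ∑ j, v j) (hmix : ∑ j, (v j / ∑ k, v k) * x j ≤ c) :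
    ∑ j, v j * x j ≤ (∑ j, v j) * c := by
  calc ∑ j, v j * x j = (∑ k, v k) * ∑ j, (v j / ∑ k, v k) * x j := by
        rw [mul_sum]
        exact sum_congr rfl fun j _ ↦ by field_simp
    _ ≤ (∑ j, v j) * c := mul_le_mul_of_nonneg_left hmix hv.le

theorem le_add_log_div_of_inv_mul_exp_le {η N H L : ℝ} (hη : 0 < η) (hN : 0 < N)
    (h : N⁻¹ * exp (-η * L) ≤ exp (-η * H)) : H ≤ L + log N / η := by
  have hlog := log_le_log (by positivity) h
  rw [log_mul (by positivity) (exp_ne_zero _), log_inv, log_exp, log_exp] at hlog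
  rw [← sub_le_iff_le_add', le_div_iff₀ hη]
  linarith

theorem aa_regret_bound_general (η : ℝ) (hη : 0 < η) (N T : ℕ)
    (h : ℕ → ℝ) (l : Fin N → ℕ → ℝ) (w : Fin N → ℕ → ℝ)
    (hw1 : ∀ i, w i 1 = 1 / N)
    (hwrec : ∀ i, ∀ t, 1 ≤ t → w i (t + 1) = w i t * Real.exp (-η * l i t))
    (hmix : ∀ t, 1 ≤ t → t ≤ T →
      Real.exp (-η * h t) ≥ ∑ i, (w i t / ∑ j, w j t) * Real.exp (-η * l i t)) :
    ∀ i, ∑ t ∈ Finset.Icc 1 T, h t ≤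
      (∑ t ∈ Finset.Icc 1 T, l i t) + Real.log N / η := by
  intro i
  have hN : (0 : ℝ) < N := by exact_mod_cast i.pos
  have hw : ∀ j S, w j (S + 1) = (N : ℝ)⁻¹ * exp (-η * ∑ t ∈ Icc 1 S, l j t) := by
    intro j S
    rw [eq_mul_prod_Icc_of_succ_eq (hwrec j) S, hw1, ← exp_sum, mul_sum, one_div]
  have hw_pos : ∀ j t, 1 ≤ t → 0 < w j t := fun j t ht ↦ by
    obtain ⟨S, rfl⟩ := Nat.exists_eq_add_of_le' ht
    rw [hw]; positivity
  have hW1 : ∑ j, w j 1 = 1 := by simp [hw1, hN.ne']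
  have hstep : ∀ t ∈ Icc 1 T, ∑ j, w j (t + 1) ≤ (∑ j, w j t) * exp (-η * h t) := by
    intro t ht
    obtain ⟨ht1, htT⟩ := mem_Icc.mp ht
    simp only [hwrec _ t ht1]
    exact sum_mul_le_of_sum_div_mul_le (sum_pos (fun j _ ↦ hw_pos j t ht1) ⟨i, mem_univ i⟩)
      (hmix t ht1 htT)
  have hW : ∑ j, w j (T + 1) ≤ exp (-η * ∑ t ∈ Icc 1 T, h t) := by
    calc ∑ j, w j (T + 1) ≤ (∑ j, w j 1) * ∏ t ∈ Icc 1 T, exp (-η * h t) :=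
          le_mul_prod_Icc_of_succ_le (f := fun t ↦ ∑ j, w j t)
            (fun _ _ ↦ (exp_pos _).le) hstep
      _ = exp (-η * ∑ t ∈ Icc 1 T, h t) := by rw [hW1, one_mul, ← exp_sum, mul_sum]
  refine le_add_log_div_of_inv_mul_exp_le hη hN ?_
  calc (N : ℝ)⁻¹ * exp (-η * ∑ t ∈ Icc 1 T, l i t) = w i (T + 1) := (hw i T).symm
    _ ≤ ∑ j, w j (T + 1) := single_le_sum (fun j _ ↦ (hw_pos j _ le_add_self).le) (mem_univ i)
    _ ≤ exp (-η * ∑ t ∈ Icc 1 T, h t) := hW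

/-- Regret analysis of Vovk's Aggregating Algorithm: if the learner's loss `h t`
always satisfies the mixability inequality with the normalized exponential weights,
then the learner's cumulative loss exceeds each expert's by at most `(ln N)/η`. -/
theorem aa_regret_bound (η : ℝ) (hη : 0 < η) (N T : ℕ) (hN : 1 ≤ N) (hT : 1 ≤ T)
    (h : ℕ → ℝ) (l : Fin N → ℕ → ℝ) (w : Fin N → ℕ → ℝ)
    (hw1 : ∀ i, w i 1 = 1 / N)
    (hwrec : ∀ i, ∀ t, 1 ≤ t → w i (t + 1) = w i t * Real.exp (-η * l i t))
    (hmix : ∀ t, 1 ≤ t → t ≤ T →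
      Real.exp (-η * h t) ≥ ∑ i, (w i t / ∑ j, w j t) * Real.exp (-η * l i t)) :
    ∀ i, ∑ t ∈ Finset.Icc 1 T, h t ≤
      (∑ t ∈ Finset.Icc 1 T, l i t) + Real.log N / η :=
  aa_regret_bound_general η hη N T h l w hw1 hwrec hmix
end

section
/- Let η > 0, N ≥ 1, T ≥ 1. For 1 ≤ i ≤ N and 1 ≤ t ≤ T let l_{i,t} ∈ ℝ be expert losses, h_t ∈ ℝ learner losses, and p_{i,t} ∈ [0,1] confidence levels. Define weights by w_{i,1} = 1/N and w_{i,t+1} = w_{i,t} · exp(−η·(p_{i,t}·l_{i,t} + (1 − p_{i,t})·h_t)). Assume that for each t one has Σ_{j=1}^N p_{j,t} w_{j,t} > 0 and exp(−η h_t) ≥ Σ_{i=1}^N w*_{i,t} · exp(−η l_{i,t}), where w*_{i,t} = p_{i,t} w_{i,t} / Σ_{j=1}^N p_{j,t} w_{j,t}. Then for every i with 1 ≤ i ≤ N the cumulative discounted regret satisfies Σ_{t=1}^T p_{i,t}·(h_t − l_{i,t}) ≤ (ln N)/η. -/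
/-!
Write `H_T = ∑_{t ≤ T} h_t`. Since `exp` is convex, the estimated loss `p l + (1 - p) h` of a
virtual expert makes its new weight at most `p w e^{-η l} + (1 - p) w e^{-η h}`; summing over the
experts and using mixability for the confidence-reweighted weights shows that the total weight is
multiplied by at most `e^{-η h_t}` in each round, so it stays below `e^{-η H_T}`. On the other hand
expert `i` alone carries `e^{-η (H_T - R_i)} / N`, where `R_i` is its discounted regret, hence
`e^{η R_i} ≤ N`.
-/

open Finset Real

theorem Real.exp_convex_comb_le {p : ℝ} (hp : p ∈ Set.Icc (0 : ℝ) 1) (x y : ℝ) :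
    exp (p * x + (1 - p) * y) ≤ p * exp x + (1 - p) * exp y :=
  convexOn_exp.2 (Set.mem_univ x) (Set.mem_univ y) hp.1 (by linarith [hp.2]) (by ring)

theorem Finset.sum_mul_le_of_sum_div_mul_le {ι : Type*} (s : Finset ι) {a x : ι → ℝ} {c : ℝ}
    (hpos : 0 < ∑ j ∈ s, a j) (h : ∑ j ∈ s, (a j / ∑ k ∈ s, a k) * x j ≤ c) :
    ∑ j ∈ s, a j * x j ≤ (∑ j ∈ s, a j) * c := by
  simp only [div_mul_eq_mul_div, ← Finset.sum_div] at h
  rwa [div_le_iff₀ hpos, mul_comm c] at h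

theorem sum_mul_exp_estimated_loss_le {ι : Type*} [Fintype ι] (η h : ℝ) {p l w : ι → ℝ}
    (hp : ∀ j, p j ∈ Set.Icc (0 : ℝ) 1) (hw : ∀ j, 0 ≤ w j) (hpos : 0 < ∑ j, p j * w j)
    (hmix : ∑ j, (p j * w j / ∑ k, p k * w k) * exp (-η * l j) ≤ exp (-η * h)) :
    ∑ j, w j * exp (-η * (p j * l j + (1 - p j) * h)) ≤ (∑ j, w j) * exp (-η * h) := by
  have hconv : ∀ j, w j * exp (-η * (p j * l j + (1 - p j) * h)) ≤
      p j * w j * exp (-η * l j) + (1 - p j) * w j * exp (-η * h) := fun j => by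
    calc w j * exp (-η * (p j * l j + (1 - p j) * h))
        = w j * exp (p j * (-η * l j) + (1 - p j) * (-η * h)) := by ring_nf
      _ ≤ w j * (p j * exp (-η * l j) + (1 - p j) * exp (-η * h)) :=
          mul_le_mul_of_nonneg_left (exp_convex_comb_le (hp j) _ _) (hw j)
      _ = _ := by ring
  have hmix' := Finset.univ.sum_mul_le_of_sum_div_mul_le hpos hmix
  calc ∑ j, w j * exp (-η * (p j * l j + (1 - p j) * h))
      ≤ ∑ j, p j * w j * exp (-η * l j) + (∑ j, (1 - p j) * w j) * exp (-η * h) := by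
        rw [Finset.sum_mul, ← Finset.sum_add_distrib]
        exact Finset.sum_le_sum fun j _ => hconv j
    _ ≤ (∑ j, p j * w j + ∑ j, (1 - p j) * w j) * exp (-η * h) := by
        rw [add_mul]; gcongr
    _ = (∑ j, w j) * exp (-η * h) := by
        rw [← Finset.sum_add_distrib]; congr 1; exact Finset.sum_congr rfl fun j _ => by ring

section Telescoping

variable {f g : ℕ → ℝ}

theorem eq_mul_exp_sum_Icc_of_succ_eq (hf : ∀ t, 1 ≤ t → f (t + 1) = f t * exp (g t)) (T : ℕ) :
    f (T + 1) = f 1 * exp (∑ t ∈ Icc 1 T, g t) := by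
  induction T with
  | zero => simp
  | succ T ih =>
    rw [hf (T + 1) (by omega), ih, sum_Icc_succ_top (by omega), exp_add, mul_assoc]

theorem le_mul_exp_sum_Icc_of_succ_le {T : ℕ}
    (hf : ∀ t, 1 ≤ t → t ≤ T → f (t + 1) ≤ f t * exp (g t)) :
    f (T + 1) ≤ f 1 * exp (∑ t ∈ Icc 1 T, g t) := by
  induction T with
  | zero => simp
  | succ T ih =>
    calc f (T + 1 + 1) ≤ f (T + 1) * exp (g (T + 1)) := hf (T + 1) (by omega) le_rfl
      _ ≤ f 1 * exp (∑ t ∈ Icc 1 T, g t) * exp (g (T + 1)) :=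
          mul_le_mul_of_nonneg_right (ih fun t h1 h2 => hf t h1 (by omega)) (exp_pos _).le
      _ = f 1 * exp (∑ t ∈ Icc 1 (T + 1), g t) := by
          rw [sum_Icc_succ_top (by omega), exp_add, mul_assoc]

end Telescoping

theorem le_log_div_of_exp_le_mul_exp {η A B N : ℝ} (hη : 0 < η) (hN : 0 < N)
    (h : exp (-η * A) ≤ N * exp (-η * B)) : B - A ≤ log N / η := by
  rw [le_div_iff₀ hη, le_log_iff_exp_le hN]
  calc exp ((B - A) * η) = exp (-η * A) / exp (-η * B) := by rw [← exp_sub]; ring_nf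
    _ ≤ N := by rwa [div_le_iff₀ (exp_pos _)]

theorem aa_confidence_regret_bound_general (η : ℝ) (hη : 0 < η) (N T : ℕ)
    (h : ℕ → ℝ) (l : Fin N → ℕ → ℝ) (p : Fin N → ℕ → ℝ)
    (hp : ∀ i t, p i t ∈ Set.Icc (0 : ℝ) 1)
    (w : Fin N → ℕ → ℝ)
    (hw1 : ∀ i, w i 1 = 1 / N)
    (hwrec : ∀ i, ∀ t, 1 ≤ t →
      w i (t + 1) = w i t * Real.exp (-η * (p i t * l i t + (1 - p i t) * h t)))
    (hpos : ∀ t, 1 ≤ t → t ≤ T → 0 < ∑ j, p j t * w j t)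
    (hmix : ∀ t, 1 ≤ t → t ≤ T →
      Real.exp (-η * h t) ≥
        ∑ i, (p i t * w i t / ∑ j, p j t * w j t) * Real.exp (-η * l i t)) :
    ∀ i, ∑ t ∈ Finset.Icc 1 T, p i t * (h t - l i t) ≤ Real.log N / η := by
  intro i
  have hN_pos : (0 : ℝ) < N := by exact_mod_cast i.pos
  have hw : ∀ j t, w j (t + 1) =
      1 / N * exp (∑ s ∈ Icc 1 t, -η * (p j s * l j s + (1 - p j s) * h s)) := fun j =>
    hw1 j ▸ eq_mul_exp_sum_Icc_of_succ_eq (hwrec j)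
  have hw_nonneg : ∀ j t, 1 ≤ t → 0 ≤ w j t := fun j t ht => by
    obtain ⟨s, rfl⟩ := Nat.exists_eq_add_of_le' ht
    rw [hw]; positivity
  have htotal : ∑ j, w j (T + 1) ≤ exp (∑ t ∈ Icc 1 T, -η * h t) := by
    have := le_mul_exp_sum_Icc_of_succ_le (f := fun t => ∑ j, w j t) (T := T)
      fun t ht1 htT => by
        simp only [hwrec _ t ht1]
        exact sum_mul_exp_estimated_loss_le η (h t) (hp · t) (hw_nonneg · t ht1)
          (hpos t ht1 htT) (hmix t ht1 htT)
    simpa [hw1, hN_pos.ne'] using this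
  have hi := ((hw i T).symm.trans_le (single_le_sum (fun j _ => hw_nonneg j (T + 1) (by omega))
    (mem_univ i))).trans htotal
  rw [← mul_sum, ← mul_sum, one_div, inv_mul_le_iff₀ hN_pos] at hi
  convert le_log_div_of_exp_le_mul_exp hη hN_pos hi using 1
  rw [← sum_sub_distrib]
  exact sum_congr rfl fun t _ => by ring

/-- Regret bound for the Aggregating Algorithm with confidence levels (Theorem 1):
the cumulative discounted regret `Σ_t p_{i,t}(h_t - l_{i,t})` against every expert `i`
is at most `(ln N)/η`. -/
theorem aa_confidence_regret_bound (η : ℝ) (hη : 0 < η) (N T : ℕ)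
    (hN : 1 ≤ N) (hT : 1 ≤ T)
    (h : ℕ → ℝ) (l : Fin N → ℕ → ℝ) (p : Fin N → ℕ → ℝ)
    (hp : ∀ i t, p i t ∈ Set.Icc (0 : ℝ) 1)
    (w : Fin N → ℕ → ℝ)
    (hw1 : ∀ i, w i 1 = 1 / N)
    (hwrec : ∀ i, ∀ t, 1 ≤ t →
      w i (t + 1) = w i t * Real.exp (-η * (p i t * l i t + (1 - p i t) * h t)))
    (hpos : ∀ t, 1 ≤ t → t ≤ T → 0 < ∑ j, p j t * w j t)
    (hmix : ∀ t, 1 ≤ t → t ≤ T →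
      Real.exp (-η * h t) ≥
        ∑ i, (p i t * w i t / ∑ j, p j t * w j t) * Real.exp (-η * l i t)) :
    ∀ i, ∑ t ∈ Finset.Icc 1 T, p i t * (h t - l i t) ≤ Real.log N / η :=
  aa_confidence_regret_bound_general η hη N T h l p hp w hw1 hwrec hpos hmix
end

section
/- Let a < b and N ≥ 1, let q = (q_1, …, q_N) be a probability vector, and let F_1, …, F_N be distribution functions on [a,b]. Define F(u) = Σ_{i=1}^N q_i · F_i(u) for u ∈ [a,b]. Then for every y ∈ [a,b] one has exp(−(1/(2(b−a))) · CRPS(F, y)) ≥ Σ_{i=1}^N q_i · exp(−(1/(2(b−a))) · CRPS(F_i, y)). -/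
/-!
In a real inner product space, along the line through `w` in direction `d` the quantity
`‖x‖² - s(x)²`, with `s(x) = ⟪x, d⟫ / ‖d‖`, is constant, so `exp (-η ‖x‖²)` is a positive
constant times `exp (-η s(x)²)` with `s` affine and `|s(x)| ≤ ‖x‖`. Since `exp (-η s²)` is
concave for `2 η s² ≤ 1`, `exp (-η ‖x‖²)` is concave on the ball of radius `r` whenever
`2 η r² ≤ 1`.

`CRPS(F, y)` is the squared norm of `F - H(· - y)` in `L²(a, b)`, which is affine in `F` and lies
in the ball of radius `√(b - a)` because `|F - H| ≤ 1`. With `η = 1 / (2 (b - a))`, Jensen's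
inequality for this concave function is the claim.
-/

open Real Set MeasureTheory

lemma concaveOn_exp_neg_mul_sq {η r : ℝ} (hη : 0 ≤ η) (hr : 2 * η * r ^ 2 ≤ 1) :
    ConcaveOn ℝ (Icc (-r) r) fun x => exp (-η * x ^ 2) := by
  have hf' : ∀ x, HasDerivAt (fun x => exp (-η * x ^ 2)) (exp (-η * x ^ 2) * (-2 * η * x)) x :=
    fun x => ((hasDerivAt_pow 2 x).const_mul (-η)).exp.congr_deriv (by ring)
  have hf'' : ∀ x, HasDerivAt (fun x => exp (-η * x ^ 2) * (-2 * η * x))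
      (exp (-η * x ^ 2) * (2 * η * (2 * η * x ^ 2 - 1))) x := fun x =>
    ((hf' x).mul ((hasDerivAt_id' x).const_mul (-2 * η))).congr_deriv (by ring)
  refine concaveOn_of_hasDerivWithinAt2_nonpos (convex_Icc _ _)
    (fun x _ => (hf' x).continuousAt.continuousWithinAt) (fun x _ => (hf' x).hasDerivWithinAt)
    (fun x _ => (hf'' x).hasDerivWithinAt) fun x hx => ?_
  rw [interior_Icc] at hx
  have hx2 : x ^ 2 ≤ r ^ 2 := sq_le_sq' hx.1.le hx.2.le
  have : 2 * η * x ^ 2 ≤ 1 := by nlinarith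
  exact mul_nonpos_of_nonneg_of_nonpos (exp_pos _).le
    (mul_nonpos_of_nonneg_of_nonpos (by positivity) (by linarith))

section InnerProductSpace

variable {E : Type*} [NormedAddCommGroup E] [InnerProductSpace ℝ E]

lemma norm_sq_sub_inner_sq_div_add_smul {d : E} (hd : d ≠ 0) (w : E) (t : ℝ) :
    ‖w + t • d‖ ^ 2 - (inner ℝ (w + t • d) d / ‖d‖) ^ 2 =
      ‖w‖ ^ 2 - (inner ℝ w d / ‖d‖) ^ 2 := by
  have hd' : ‖d‖ ≠ 0 := norm_ne_zero_iff.2 hd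
  rw [norm_add_sq_real, inner_add_left, inner_smul_left, inner_smul_right, norm_smul,
    real_inner_self_eq_norm_sq, Real.norm_eq_abs, mul_pow, sq_abs]
  field_simp
  simp only [conj_trivial]
  ring

theorem concaveOn_exp_neg_mul_norm_sq {η r : ℝ} (hη : 0 ≤ η) (hr : 2 * η * r ^ 2 ≤ 1) :
    ConcaveOn ℝ (Metric.closedBall (0 : E) r) fun x => exp (-η * ‖x‖ ^ 2) := by
  refine ⟨convex_closedBall 0 r, fun v hv w hw p q hp hq hpq => ?_⟩
  obtain rfl | hd := eq_or_ne v w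
  · rw [← add_smul, ← add_smul, hpq, one_smul, one_smul]
  replace hd : v - w ≠ 0 := sub_ne_zero.2 hd
  set d := v - w
  set s : E → ℝ := fun x => inner ℝ x d / ‖d‖
  have hs_mem : ∀ x ∈ Metric.closedBall (0 : E) r, s x ∈ Icc (-r) r := fun x hx => by
    rw [mem_closedBall_zero_iff] at hx
    refine abs_le.1 (le_trans ?_ hx)
    rw [abs_div, abs_norm, div_le_iff₀ (norm_pos_iff.2 hd)]
    exact abs_real_inner_le_norm x d
  have hs_comb : s (p • v + q • w) = p * s v + q * s w := by
    simp only [s, inner_add_left, inner_smul_left, conj_trivial]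
    ring
  have hsplit : ∀ t : ℝ, exp (-η * ‖w + t • d‖ ^ 2) =
      exp (-η * (‖w‖ ^ 2 - s w ^ 2)) * exp (-η * s (w + t • d) ^ 2) := fun t => by
    rw [← exp_add]
    congr 1
    linear_combination (-η) * norm_sq_sub_inner_sq_div_add_smul hd w t
  have hv' : v = w + (1 : ℝ) • d := by simp [d]
  have hc' : p • v + q • w = w + p • d := by
    rw [show q = 1 - p by linarith]
    simp only [d, smul_sub, sub_smul, one_smul]
    abel
  have hw' : w = w + (0 : ℝ) • d := by simp
  have key := (concaveOn_exp_neg_mul_sq hη hr).2 (hs_mem v hv) (hs_mem w hw) hp hq hpq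
  simp only [smul_eq_mul] at key ⊢
  rw [← hs_comb] at key
  calc p * exp (-η * ‖v‖ ^ 2) + q * exp (-η * ‖w‖ ^ 2)
      = exp (-η * (‖w‖ ^ 2 - s w ^ 2)) *
          (p * exp (-η * s v ^ 2) + q * exp (-η * s w ^ 2)) := by
        rw [hv', hsplit, ← hv', hw', hsplit, ← hw']; ring
    _ ≤ exp (-η * (‖w‖ ^ 2 - s w ^ 2)) * exp (-η * s (p • v + q • w) ^ 2) := by gcongr
    _ = exp (-η * ‖p • v + q • w‖ ^ 2) := by rw [hc', hsplit, ← hc']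

end InnerProductSpace

namespace DistFunc

variable {a b : ℝ} {F : ℝ → ℝ}

lemma mem_Icc_s11 (hF : DistFunc a b F) {u : ℝ} (hu : u ∈ Icc a b) : F u ∈ Icc (0 : ℝ) 1 := by
  obtain ⟨hmono, ha, hb⟩ := hF
  have hab : a ≤ b := hu.1.trans hu.2
  exact ⟨ha ▸ hmono (left_mem_Icc.2 hab) hu hu.1, hb ▸ hmono hu (right_mem_Icc.2 hab) hu.2⟩

lemma abs_sub_heaviside_le_one (hF : DistFunc a b F) (y : ℝ) {u : ℝ} (hu : u ∈ Icc a b) :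
    |F u - if y ≤ u then 1 else 0| ≤ 1 := by
  obtain ⟨h0, h1⟩ := hF.mem_Icc_s11 hu
  split_ifs <;> exact abs_le.2 ⟨by linarith, by linarith⟩

lemma memLp_sub_heaviside (hF : DistFunc a b F) (y : ℝ) :
    MemLp (fun u => F u - if y ≤ u then 1 else 0) 2 (volume.restrict (Ioc a b)) := by
  have hF_meas : AEMeasurable F (volume.restrict (Ioc a b)) :=
    (aemeasurable_restrict_of_monotoneOn measurableSet_Icc hF.1).mono_measure
      (Measure.restrict_mono Ioc_subset_Icc_self le_rfl)
  refine MemLp.of_bound (hF_meas.sub (Measurable.ite measurableSet_Ici measurable_const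
    measurable_const).aemeasurable).aestronglyMeasurable 1
    ((ae_restrict_iff' measurableSet_Ioc).2 (ae_of_all _ fun u hu => ?_))
  exact hF.abs_sub_heaviside_le_one y (Ioc_subset_Icc_self hu)

lemma crps_le (hF : DistFunc a b F) (hab : a ≤ b) (y : ℝ) : CRPS a b F y ≤ b - a := by
  have hint := (intervalIntegrable_iff_integrableOn_Ioc_of_le hab).2
    (hF.memLp_sub_heaviside y).integrable_sq
  calc CRPS a b F y ≤ ∫ _ in a..b, (1 : ℝ) :=
        intervalIntegral.integral_mono_on hab hint intervalIntegrable_const fun u hu =>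
          (sq_le_one_iff_abs_le_one _).2 (hF.abs_sub_heaviside_le_one y hu)
    _ = b - a := by simp

end DistFunc

lemma crps_eq_norm_sq {a b y : ℝ} {F : ℝ → ℝ} (hab : a ≤ b)
    {w : Lp ℝ 2 (volume.restrict (Ioc a b))}
    (hw : w =ᵐ[volume.restrict (Ioc a b)] fun u => F u - if y ≤ u then 1 else 0) :
    CRPS a b F y = ‖w‖ ^ 2 := by
  rw [CRPS, intervalIntegral.integral_of_le hab, ← real_inner_self_eq_norm_sq, L2.inner_def]
  refine integral_congr_ae (hw.mono fun u hu => ?_)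
  simp [hu, sq]

theorem crps_exp_concave_general (a b : ℝ) (hab : a < b) (N : ℕ)
    (q : Fin N → ℝ) (hq0 : ∀ i, 0 ≤ q i) (hq1 : ∑ i, q i = 1)
    (Fi : Fin N → ℝ → ℝ) (hFi : ∀ i, DistFunc a b (Fi i)) :
    ∀ y ∈ Set.Icc a b,
      Real.exp (-(1 / (2 * (b - a))) * CRPS a b (fun u => ∑ i, q i * Fi i u) y) ≥
        ∑ i, q i * Real.exp (-(1 / (2 * (b - a))) * CRPS a b (Fi i) y) := by
  intro y _
  set μ := volume.restrict (Ioc a b)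
  set v : Fin N → Lp ℝ 2 μ := fun i => ((hFi i).memLp_sub_heaviside y).toLp
  have hv : ∀ i, v i =ᵐ[μ] fun u => Fi i u - if y ≤ u then 1 else 0 :=
    fun i => MemLp.coeFn_toLp _
  have hmix : ⇑(∑ i, q i • v i : Lp ℝ 2 μ) =ᵐ[μ]
      fun u => (∑ i, q i * Fi i u) - if y ≤ u then 1 else 0 := by
    filter_upwards [Lp.coeFn_fun_finsetSum Finset.univ (fun i => q i • v i), ae_all_iff.2 hv,
      ae_all_iff.2 fun i => Lp.coeFn_smul (q i) (v i)] with u hsum hvu hsmul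
    simp only [hsum, hsmul, hvu, Pi.smul_apply, smul_eq_mul, mul_sub, Finset.sum_sub_distrib,
      ← Finset.sum_mul, hq1, one_mul]
  have hba : 0 < b - a := sub_pos.2 hab
  have hball : ∀ i ∈ Finset.univ, v i ∈ Metric.closedBall (0 : Lp ℝ 2 μ) √(b - a) :=
    fun i _ => by
      rw [mem_closedBall_zero_iff, Real.le_sqrt (norm_nonneg _) hba.le,
        ← crps_eq_norm_sq hab.le (hv i)]
      exact (hFi i).crps_le hab.le y
  have hconc := concaveOn_exp_neg_mul_norm_sq (E := Lp ℝ 2 μ) (η := 1 / (2 * (b - a)))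
    (by positivity) (by rw [sq_sqrt hba.le]; field_simp; rfl)
  rw [crps_eq_norm_sq hab.le hmix, ge_iff_le]
  simpa only [crps_eq_norm_sq hab.le (hv _), smul_eq_mul] using
    hconc.le_map_sum (fun i _ => hq0 i) hq1 hball

/-- The `1/(2(b-a))`-exponential concavity of CRPS: the weighted average of the
experts' distribution functions dominates the `q`-mixture of exponentiated losses. -/
theorem crps_exp_concave (a b : ℝ) (hab : a < b) (N : ℕ) (hN : 1 ≤ N)
    (q : Fin N → ℝ) (hq0 : ∀ i, 0 ≤ q i) (hq1 : ∑ i, q i = 1)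
    (Fi : Fin N → ℝ → ℝ) (hFi : ∀ i, DistFunc a b (Fi i)) :
    ∀ y ∈ Set.Icc a b,
      Real.exp (-(1 / (2 * (b - a))) * CRPS a b (fun u => ∑ i, q i * Fi i u) y) ≥
        ∑ i, q i * Real.exp (-(1 / (2 * (b - a))) * CRPS a b (Fi i) y) :=
  crps_exp_concave_general a b hab N q hq0 hq1 Fi hFi
end
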